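/- Let f_0 be a density on ℝ and suppose there is a constant C_5 > 0 and σ_0 > 0 such that (φ_{σ/√2} * f_0)(y) ≥ C_5' f_0(y) for all y and all σ < σ_0 (where C_5' > 0). Then for any μ ∈ C[0,1] and σ < σ_0, with μ_0 the quantile function of f_0, the density f_{μ,σ}(y) = ∫_0^1 φ_σ(y - μ(x)) dx satisfies f_{μ,σ}(y) ≥ C f_0(y) · exp( - ‖μ - μ_0‖_∞² / σ² ) for some constant C > 0 depending only on C_5', and consequently log ‖f_0 / f_{μ,σ}‖_∞ ≤ C_6 + ‖μ - μ_0‖_∞² / σ² for a constant C_6. -/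

import Mathlib

open MeasureTheory Real Set

/-- The Gaussian density with mean 0 and standard deviation `σ`. -/
noncomputable def phi (σ u : ℝ) : ℝ :=
  (Real.sqrt (2 * Real.pi * σ ^ 2))⁻¹ * Real.exp (-u ^ 2 / (2 * σ ^ 2))

/-- `f_{μ,σ}(y) = ∫_0^1 φ_σ(y - μ x) dx`. -/
noncomputable def fdens (μ : ℝ → ℝ) (σ y : ℝ) : ℝ :=
  ∫ x in Set.Icc (0:ℝ) 1, phi σ (y - μ x)

/-! Pointwise, `(y - μ x)² ≤ 2 (y - μ₀ x)² + 2 M²`, so `φ_σ(y - μ x)` dominates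
`exp(-M²/σ²) φ_{σ/√2}(y - μ₀ x)` up to the factor `√2` between the two normalising constants.
Integrating over `[0,1]` and using the quantile identity turns the right-hand side into
`exp(-M²/σ²) (φ_{σ/√2} * f₀)(y)/√2`, which the convolution hypothesis bounds below by
`C₅' exp(-M²/σ²) f₀(y)/√2`. -/

lemma phi_nonneg (σ u : ℝ) : 0 ≤ phi σ u := by
  unfold phi; positivity

lemma continuous_phi (σ : ℝ) : Continuous (phi σ) := by
  unfold phi; fun_prop

lemma phi_div_sqrt_two (σ v : ℝ) :
    phi (σ / √2) v = √2 * (√(2 * π * σ ^ 2))⁻¹ * exp (-v ^ 2 / σ ^ 2) := by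
  have hsq : (σ / √2) ^ 2 = σ ^ 2 / 2 := by rw [div_pow, sq_sqrt zero_le_two]
  have hnorm : √(2 * π * (σ ^ 2 / 2)) = √(2 * π * σ ^ 2) / √2 := by
    rw [← sqrt_div' _ zero_le_two]; ring_nf
  have hexp : 2 * (σ ^ 2 / 2) = σ ^ 2 := by ring
  rw [phi, hsq, hnorm, hexp, inv_div, div_eq_mul_inv]

lemma neg_sq_div_add_neg_sq_div_le {σ M u v : ℝ} (hσ : 0 < σ) (huv : |u - v| ≤ M) :
    -M ^ 2 / σ ^ 2 + -v ^ 2 / σ ^ 2 ≤ -u ^ 2 / (2 * σ ^ 2) := by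
  have hM : (u - v) ^ 2 ≤ M ^ 2 := by
    rw [← sq_abs]; exact pow_le_pow_left₀ (abs_nonneg _) huv 2
  rw [← add_div, div_le_div_iff₀ (by positivity) (by positivity)]
  nlinarith [sq_nonneg (u - 2 * v), sq_nonneg σ]

lemma inv_sqrt_two_mul_exp_mul_phi_le {σ M u v : ℝ} (hσ : 0 < σ) (huv : |u - v| ≤ M) :
    (√2)⁻¹ * exp (-M ^ 2 / σ ^ 2) * phi (σ / √2) v ≤ phi σ u := by
  have hs2 : √2 ≠ 0 := by positivity
  calc (√2)⁻¹ * exp (-M ^ 2 / σ ^ 2) * phi (σ / √2) v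
      = (√(2 * π * σ ^ 2))⁻¹ * exp (-M ^ 2 / σ ^ 2 + -v ^ 2 / σ ^ 2) := by
        rw [phi_div_sqrt_two, exp_add]; field_simp
    _ ≤ phi σ u := by
        unfold phi
        gcongr
        exact neg_sq_div_add_neg_sq_div_le hσ huv

lemma inv_sqrt_two_mul_exp_mul_fdens_le {μ ν : ℝ → ℝ} {σ M : ℝ} (hσ : 0 < σ)
    (hμ : ContinuousOn μ (Icc 0 1)) (hM : ∀ x ∈ Icc (0:ℝ) 1, |μ x - ν x| ≤ M) (y : ℝ) :
    (√2)⁻¹ * exp (-M ^ 2 / σ ^ 2) * fdens ν (σ / √2) y ≤ fdens μ σ y := by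
  rw [fdens, ← integral_const_mul]
  refine integral_mono_of_nonneg ?_ ?_ ?_
  · filter_upwards with x
    have := phi_nonneg (σ / √2) (y - ν x)
    positivity
  · exact ((continuous_phi σ).comp_continuousOn (continuousOn_const.sub hμ)).integrableOn_Icc
  · filter_upwards [ae_restrict_mem measurableSet_Icc] with x hx
    refine inv_sqrt_two_mul_exp_mul_phi_le hσ ?_
    rw [sub_sub_sub_cancel_left, abs_sub_comm]
    exact hM x hx

lemma le_exp_neg_log_add_mul_of_mul_exp_neg_le {c a b t : ℝ} (hc : 0 < c)
    (h : c * a * exp (-t) ≤ b) : a ≤ exp (-log c + t) * b := by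
  rw [exp_add, exp_neg, exp_log hc]
  calc a = c⁻¹ * exp t * (c * a * exp (-t)) := by
        rw [exp_neg]; field_simp
    _ ≤ c⁻¹ * exp t * b := by gcongr

/-- `μ₀` enters only through the quantile identity `hquant`, `M` is any bound on `‖μ - μ₀‖_∞`,
and the second conjunct is `log ‖f₀/f_{μ,σ}‖_∞ ≤ C₆ + M²/σ²` in multiplicative form. -/
theorem fdens_lower_bound_general
    (f0 μ0 : ℝ → ℝ)
    (hquant : ∀ (y s : ℝ), 0 < s →
      (∫ x in Set.Icc (0:ℝ) 1, phi s (y - μ0 x)) = ∫ t, phi s (y - t) * f0 t)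
    (C5' σ0 : ℝ) (hC5' : 0 < C5')
    (hconv : ∀ y σ, 0 < σ → σ < σ0 →
      C5' * f0 y ≤ ∫ t, phi (σ / Real.sqrt 2) (y - t) * f0 t) :
    ∃ C > 0, ∃ C6 : ℝ,
      ∀ (μ : ℝ → ℝ), ContinuousOn μ (Set.Icc 0 1) →
      ∀ σ, 0 < σ → σ < σ0 →
      ∀ M : ℝ, (∀ x ∈ Set.Icc (0:ℝ) 1, |μ x - μ0 x| ≤ M) →
      (∀ y, C * f0 y * Real.exp (-M ^ 2 / σ ^ 2) ≤ fdens μ σ y) ∧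
      (∀ y, f0 y ≤ Real.exp (C6 + M ^ 2 / σ ^ 2) * fdens μ σ y) := by
  have hC : 0 < C5' / √2 := by positivity
  refine ⟨C5' / √2, hC, -log (C5' / √2), fun μ hμ σ hσ hσσ0 M hM => ?_⟩
  have lower : ∀ y, C5' / √2 * f0 y * exp (-M ^ 2 / σ ^ 2) ≤ fdens μ σ y := fun y =>
    calc C5' / √2 * f0 y * exp (-M ^ 2 / σ ^ 2)
        = (√2)⁻¹ * exp (-M ^ 2 / σ ^ 2) * (C5' * f0 y) := by ring
      _ ≤ (√2)⁻¹ * exp (-M ^ 2 / σ ^ 2) * fdens μ0 (σ / √2) y := by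
          rw [fdens, hquant y _ (by positivity)]
          gcongr
          exact hconv y σ hσ hσσ0
      _ ≤ fdens μ σ y := inv_sqrt_two_mul_exp_mul_fdens_le hσ hμ hM y
  exact ⟨lower, fun y => le_exp_neg_log_add_mul_of_mul_exp_neg_le hC (by simpa only [neg_div] using lower y)⟩

/-- Lower bound on `f_{μ,σ}` in terms of the true density `f₀`, and the resulting
bound `log ‖f₀/f_{μ,σ}‖_∞ ≤ C₆ + ‖μ - μ₀‖_∞²/σ²` (stated multiplicatively).
Here `μ₀` is the (bounded) quantile function of `f₀`, encoded via the
convolution identity, and `M` is any sup-norm bound on `μ - μ₀` over `[0,1]`. -/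
theorem fdens_lower_bound
    (f0 μ0 : ℝ → ℝ) (hf0 : ∀ t, 0 ≤ f0 t) (hint1 : ∫ t, f0 t = 1)
    (hquant : ∀ (y s : ℝ), 0 < s →
      (∫ x in Set.Icc (0:ℝ) 1, phi s (y - μ0 x)) = ∫ t, phi s (y - t) * f0 t)
    (C5' σ0 : ℝ) (hC5' : 0 < C5') (hσ0 : 0 < σ0)
    (hconv : ∀ y σ, 0 < σ → σ < σ0 →
      C5' * f0 y ≤ ∫ t, phi (σ / Real.sqrt 2) (y - t) * f0 t) :
    ∃ C > 0, ∃ C6 : ℝ,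
      ∀ (μ : ℝ → ℝ), ContinuousOn μ (Set.Icc 0 1) →
      ∀ σ, 0 < σ → σ < σ0 →
      ∀ M : ℝ, (∀ x ∈ Set.Icc (0:ℝ) 1, |μ x - μ0 x| ≤ M) →
      (∀ y, C * f0 y * Real.exp (-M ^ 2 / σ ^ 2) ≤ fdens μ σ y) ∧
      (∀ y, f0 y ≤ Real.exp (C6 + M ^ 2 / σ ^ 2) * fdens μ σ y) :=
  fdens_lower_bound_general f0 μ0 hquant C5' σ0 hC5' hconv
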